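/- Let R be a commutative unital ring and let M, N be R-modules such that M and M ⊗_R N are finitely generated projective R-modules and the localization M_𝔭 is nonzero for every prime ideal 𝔭 of R. Then N is a finitely generated projective R-module. -/

import Mathlib

/-!
For projective `M` the trace ideal `τ(M)` satisfies `τ(M) • M = M`, so by Nakayama it lies in no
prime of the support of `M`; since `M` has full support, `τ(M) = R`. Writing `1 = ∑ fᵢ (xᵢ)` with
`fᵢ ∈ M^*` makes `R` a retract of `Mⁿ`, hence `N` a retract of `Mⁿ ⊗ N ≅ (M ⊗ N)ⁿ`, which is
finite projective.
-/

universe u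

namespace Module

open TensorProduct

variable {R M : Type*} [CommRing R] [AddCommGroup M] [Module R M]

instance Projective.pi {ι : Type*} [Fintype ι] {A : ι → Type*} [∀ i, AddCommGroup (A i)]
    [∀ i, Module R (A i)] [∀ i, Projective R (A i)] : Projective R (∀ i, A i) :=
  .of_equiv (DFinsupp.linearEquivFunOnFintype (R := R) (M := A))

variable (R M) in
def traceIdeal : Ideal R := ⨆ f : Dual R M, LinearMap.range f

theorem traceIdeal_smul_top_eq_top [Projective R M] :
    traceIdeal R M • (⊤ : Submodule R M) = ⊤ := by
  obtain ⟨s, hs⟩ := projective_def'.mp ‹Projective R M›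
  refine eq_top_iff.mpr fun x _ => ?_
  have hx : x = (s x).sum fun m c => c • m := by
    simpa [Finsupp.linearCombination_apply] using (LinearMap.congr_fun hs x).symm
  rw [hx]
  refine Submodule.sum_mem _ fun m _ => Submodule.smul_mem_smul ?_ Submodule.mem_top
  exact Submodule.mem_iSup_of_mem (Finsupp.lapply m ∘ₗ s) ⟨x, rfl⟩

theorem traceIdeal_eq_top [Module.Finite R M] [Projective R M]
    (h : support R M = Set.univ) : traceIdeal R M = ⊤ := by
  by_contra hI
  obtain ⟨m, hm, hIm⟩ := Ideal.exists_le_maximal _ hI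
  obtain ⟨r, hr1, hrM⟩ := Submodule.exists_sub_one_mem_and_smul_eq_zero_of_fg_of_le_smul
    (traceIdeal R M) ⊤ Module.Finite.fg_top traceIdeal_smul_top_eq_top.ge
  have hrm : r ∉ m := fun hr =>
    hm.ne_top ((Ideal.eq_top_iff_one m).mpr (by simpa using m.sub_mem hr (hIm hr1)))
  have hm_supp : (⟨m, hm.isPrime⟩ : PrimeSpectrum R) ∉ support R M :=
    notMem_support_iff'.mpr fun x => ⟨r, hrm, hrM x Submodule.mem_top⟩
  exact hm_supp (h ▸ Set.mem_univ _)

theorem exists_finset_sum_apply_eq_one (h : traceIdeal R M = ⊤) :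
    ∃ (s : Finset (Dual R M)) (x : Dual R M → M), ∑ f ∈ s, f (x f) = 1 := by
  obtain ⟨g, hg, hsum⟩ :=
    (Submodule.mem_iSup_iff_exists_finsupp _ (1 : R)).mp (h ▸ Submodule.mem_top)
  choose x hx using hg
  exact ⟨g.support, x, by simpa [hx, Finsupp.sum] using hsum⟩

theorem exists_retraction_pi_tensorProduct {ι : Type*} [Fintype ι] (f : ι → Dual R M) (x : ι → M)
    (hfx : ∑ i, f i (x i) = 1) (N : Type*) [AddCommGroup N] [Module R N] :
    ∃ (s : N →ₗ[R] ι → M ⊗[R] N) (r : (ι → M ⊗[R] N) →ₗ[R] N), r ∘ₗ s = LinearMap.id := by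
  refine ⟨LinearMap.pi fun i => TensorProduct.mk R M N (x i),
    ∑ i, (TensorProduct.lid R N).toLinearMap ∘ₗ (f i).rTensor N ∘ₗ LinearMap.proj i, ?_⟩
  ext n
  simp [← Finset.sum_smul, hfx]

end Module

/-- **Statement 1.** Let `R` be a commutative unital ring and `M`, `N` modules
such that `M` and `M ⊗_R N` are finitely generated projective and `M_𝔭 ≠ 0` for
every prime `𝔭`.  Then `N` is finitely generated projective. -/
theorem statement_1 {R M N : Type u} [CommRing R]
    [AddCommGroup M] [Module R M] [AddCommGroup N] [Module R N]
    [Module.Finite R M] [Module.Projective R M]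
    [Module.Finite R (TensorProduct R M N)] [Module.Projective R (TensorProduct R M N)]
    (h : ∀ (p : Ideal R) (_ : p.IsPrime), Nontrivial (LocalizedModule p.primeCompl M)) :
    Module.Finite R N ∧ Module.Projective R N := by
  have htrace : Module.traceIdeal R M = ⊤ :=
    Module.traceIdeal_eq_top (Set.eq_univ_of_forall fun p => h p.asIdeal p.isPrime)
  obtain ⟨t, x, htx⟩ := Module.exists_finset_sum_apply_eq_one htrace
  obtain ⟨s, r, hrs⟩ :=
    Module.exists_retraction_pi_tensorProduct (fun f : t => (f : Module.Dual R M)) (fun f => x f)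
    (by rwa [Finset.sum_coe_sort t fun f => f (x f)]) N
  exact ⟨.of_surjective r fun n => ⟨s n, LinearMap.congr_fun hrs n⟩, .of_split s r hrs⟩
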